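/- Let K ⊆ E be a compact set such that ∇f x ≠ 0 for every x ∈ K with f x > 0, and let ρ > 0 be such that the set {x ∈ K | f x = t} is nonempty for every t ∈ (0, ρ). Then the function t ↦ β^K t is strictly positive on (0, ρ) and lower semicontinuous at every point of (0, ρ). -/
import Mathlib


open Set MeasureTheory

variable {n : ℕ}

noncomputable def betaK (f : EuclideanSpace ℝ (Fin n) → ℝ)
    (K : Set (EuclideanSpace ℝ (Fin n))) (t : ℝ) : ℝ :=
  sInf {y : ℝ | ∃ x ∈ K, f x = t ∧ y = ‖gradient f x‖⁻¹}

lemma normGrad_continuousOn (f : EuclideanSpace ℝ (Fin n) → ℝ)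
    (hf : Continuous f) (hC1 : ContDiffOn ℝ 1 f (f ⁻¹' {0})ᶜ) :
    ContinuousOn (fun x => ‖gradient f x‖) (f ⁻¹' {0})ᶜ := by
  have hU : IsOpen (f ⁻¹' {0})ᶜ := (isClosed_singleton.preimage hf).isOpen_compl
  have h1 : ContinuousOn (fderiv ℝ f) (f ⁻¹' {0})ᶜ :=
    hC1.continuousOn_fderiv_of_isOpen hU le_rfl
  have h2 : ContinuousOn (gradient f) (f ⁻¹' {0})ᶜ :=
    (InnerProductSpace.toDual ℝ _).symm.continuous.comp_continuousOn h1
  exact h2.norm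

lemma le_betaK (f : EuclideanSpace ℝ (Fin n) → ℝ)
    (K : Set (EuclideanSpace ℝ (Fin n))) (t c : ℝ)
    (h : ∀ x ∈ K, f x = t → c ≤ ‖gradient f x‖⁻¹) (hne : {x ∈ K | f x = t}.Nonempty) :
    c ≤ betaK f K t := by
  obtain ⟨x₀, hx₀K, hx₀⟩ := hne
  refine le_csInf ⟨‖gradient f x₀‖⁻¹, x₀, hx₀K, hx₀, rfl⟩ ?_
  rintro y ⟨x, hxK, hfx, rfl⟩
  exact h x hxK hfx

lemma betaK_le (f : EuclideanSpace ℝ (Fin n) → ℝ)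
    (K : Set (EuclideanSpace ℝ (Fin n))) (t : ℝ)
    (x : EuclideanSpace ℝ (Fin n)) (hxK : x ∈ K) (hfx : f x = t) :
    betaK f K t ≤ ‖gradient f x‖⁻¹ := by
  refine csInf_le ⟨0, ?_⟩ ⟨x, hxK, hfx, rfl⟩
  rintro y ⟨z, _, _, rfl⟩
  positivity

theorem betaK_pos_lowerSemicontinuous (n : ℕ) (hn : 1 ≤ n)
    (f : EuclideanSpace ℝ (Fin n) → ℝ)
    (hf : Continuous f) (hf0 : ∀ x, 0 ≤ f x)
    (hC1 : ContDiffOn ℝ 1 f (f ⁻¹' {0})ᶜ)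
    (K : Set (EuclideanSpace ℝ (Fin n))) (hK : IsCompact K)
    (hgrad : ∀ x ∈ K, 0 < f x → gradient f x ≠ 0)
    (ρ : ℝ) (hρ : 0 < ρ)
    (hlevel : ∀ t ∈ Ioo (0:ℝ) ρ, {x ∈ K | f x = t}.Nonempty) :
    (∀ t ∈ Ioo (0:ℝ) ρ, 0 < betaK f K t) ∧
    (∀ t ∈ Ioo (0:ℝ) ρ, LowerSemicontinuousAt (betaK f K) t) := by
  have hg := normGrad_continuousOn f hf hC1
  -- Part 1: positivity
  have hpos : ∀ t ∈ Ioo (0:ℝ) ρ, 0 < betaK f K t := by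
    intro t ht
    have hLc : IsCompact (K ∩ f ⁻¹' {t}) :=
      hK.inter_right (isClosed_singleton.preimage hf)
    have hLne : (K ∩ f ⁻¹' {t}).Nonempty := by
      obtain ⟨x, hxK, hfx⟩ := hlevel t ht
      exact ⟨x, hxK, hfx⟩
    have hLsub : K ∩ f ⁻¹' {t} ⊆ (f ⁻¹' {0})ᶜ := by
      rintro x ⟨_, hx⟩
      simp only [mem_preimage, mem_singleton_iff] at hx ⊢
      simp [hx, ht.1.ne']
    obtain ⟨x₀, hx₀, hmax⟩ := hLc.exists_isMaxOn hLne (hg.mono hLsub)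
    have hM : 0 < ‖gradient f x₀‖ := by
      have := hgrad x₀ hx₀.1 (by rw [show f x₀ = t from hx₀.2]; exact ht.1)
      simpa [norm_pos_iff] using this
    refine lt_of_lt_of_le (inv_pos.mpr hM) ?_
    refine le_betaK f K t _ ?_ (hlevel t ht)
    intro x hxK hfx
    have hx' : 0 < ‖gradient f x‖ := by
      have := hgrad x hxK (hfx ▸ ht.1)
      simpa [norm_pos_iff] using this
    have hle : ‖gradient f x‖ ≤ ‖gradient f x₀‖ := hmax ⟨hxK, hfx⟩
    exact inv_anti₀ hx' hle
  refine ⟨hpos, ?_⟩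
  -- Part 2: lower semicontinuity
  intro t₀ ht₀
  intro y hy
  have hb : 0 < betaK f K t₀ := hpos t₀ ht₀
  set y' : ℝ := (max y 0 + betaK f K t₀) / 2 with hy'def
  have hmaxlt : max y 0 < betaK f K t₀ := max_lt hy hb
  have hy'pos : 0 < y' := by
    have : 0 ≤ max y 0 := le_max_right _ _
    simp only [hy'def]; linarith
  have hyy' : y < y' := lt_of_le_of_lt (le_max_left y 0) (by simp only [hy'def]; linarith)
  have hy'b : y' < betaK f K t₀ := by simp only [hy'def]; linarith
  -- band
  set a : ℝ := t₀ / 2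
  set b' : ℝ := (t₀ + ρ) / 2
  have ht₀ab : t₀ ∈ Ioo a b' := ⟨by simp only [a]; linarith [ht₀.1], by simp only [b']; linarith [ht₀.2]⟩
  have hab_sub : Ioo a b' ⊆ Ioo 0 ρ := by
    intro t ht
    exact ⟨lt_trans (by simp only [a]; linarith [ht₀.1]) ht.1,
      lt_of_lt_of_le ht.2 (by simp only [b']; linarith [ht₀.2])⟩
  have hBc : IsCompact (K ∩ f ⁻¹' (Icc a b')) :=
    hK.inter_right (isClosed_Icc.preimage hf)
  have hBsub : K ∩ f ⁻¹' (Icc a b') ⊆ (f ⁻¹' {0})ᶜ := by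
    rintro x ⟨_, hx⟩
    simp only [mem_preimage, mem_Icc] at hx
    have : 0 < f x := lt_of_lt_of_le (by simp only [a]; linarith [ht₀.1]) hx.1
    simp [mem_preimage, this.ne']
  set A : Set (EuclideanSpace ℝ (Fin n)) :=
    (K ∩ f ⁻¹' (Icc a b')) ∩ (fun x => ‖gradient f x‖) ⁻¹' (Ici y'⁻¹) with hAdef
  have hAclosed : IsClosed A :=
    (hg.mono hBsub).preimage_isClosed_of_isClosed hBc.isClosed isClosed_Ici
  have hAc : IsCompact A := hBc.of_isClosed_subset hAclosed inter_subset_left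
  have ht₀A : t₀ ∉ f '' A := by
    rintro ⟨x, hxA, hfx⟩
    have h1 : betaK f K t₀ ≤ ‖gradient f x‖⁻¹ := betaK_le f K t₀ x hxA.1.1 hfx
    have h2 : y'⁻¹ ≤ ‖gradient f x‖ := hxA.2
    have h3 : ‖gradient f x‖⁻¹ ≤ y' := by
      rw [← inv_inv y']
      exact inv_anti₀ (inv_pos.mpr hy'pos) h2
    linarith
  have hopen : (f '' A)ᶜ ∩ Ioo a b' ∈ nhds t₀ := by
    refine Filter.inter_mem ?_ (Ioo_mem_nhds ht₀ab.1 ht₀ab.2)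
    exact (hAc.image hf).isClosed.isOpen_compl.mem_nhds ht₀A
  filter_upwards [hopen] with t ht
  obtain ⟨htA, htab⟩ := ht
  have htIoo : t ∈ Ioo 0 ρ := hab_sub htab
  have hstep : ∀ x ∈ K, f x = t → y' ≤ ‖gradient f x‖⁻¹ := by
    intro x hxK hfx
    have hxB : x ∈ K ∩ f ⁻¹' (Icc a b') := ⟨hxK, by
      simp only [mem_preimage, mem_Icc, hfx]; exact ⟨le_of_lt htab.1, le_of_lt htab.2⟩⟩
    have hxnA : x ∉ A := fun hxA => htA ⟨x, hxA, hfx⟩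
    have hlt : ‖gradient f x‖ < y'⁻¹ := by
      by_contra h
      exact hxnA ⟨hxB, le_of_not_gt h⟩
    have hx' : 0 < ‖gradient f x‖ := by
      have := hgrad x hxK (hfx ▸ htIoo.1)
      simpa [norm_pos_iff] using this
    rw [← inv_inv y']
    exact inv_anti₀ hx' (le_of_lt hlt)
  calc y < y' := hyy'
    _ ≤ betaK f K t := le_betaK f K t y' hstep (hlevel t htIoo)
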